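/- TeamLTL(⊕) ≤ PBC(∀HyperLTL): every TeamLTL(⊕) formula in ⊕-disjunctive normal form ⊕ᵢ αᵢ (each αᵢ an LTL formula) is equivalent to the PBC(∀HyperLTL) sentence ⋁ᵢ ∀π.αᵢ(π); i.e., for all teams T, T ⊨ ⊕ᵢ αᵢ iff ∅ ⊨_T ⋁ᵢ ∀π.αᵢ(π). -/
import Mathlib


/-- A trace over `AP`: an infinite sequence of sets of atomic propositions. -/
def Trace (AP : Type) := ℕ → Set AP

/-- The suffix `t[i,∞]` of a trace. -/
def Trace.shift {AP : Type} (t : Trace AP) (i : ℕ) : Trace AP := fun n => t (n + i)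

/-- `T[f,∞] = {t[s,∞] | t ∈ T, s ∈ f(t)}`. -/
def teamShift {AP : Type} (T : Set (Trace AP)) (f : Trace AP → Set ℕ) : Set (Trace AP) :=
  {s | ∃ t ∈ T, ∃ i ∈ f t, s = t.shift i}

/-- `f : T → 𝒫(ℕ)⁺`: assigns a nonempty set of time steps to every trace of the team. -/
def goodF {AP : Type} (T : Set (Trace AP)) (f : Trace AP → Set ℕ) : Prop :=
  ∀ t ∈ T, (f t).Nonempty

/-- The ordering `f' < f` on choice functions (on the domain `T'`). -/
def fLT {AP : Type} (T' : Set (Trace AP)) (f' f : Trace AP → Set ℕ) : Prop :=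
  ∀ t ∈ T', sInf (f' t) ≤ sInf (f t) ∧
    ∀ m, IsGreatest (f t) m → ∃ m', IsGreatest (f' t) m' ∧ m' < m

/-- Formulas of (NNF) LTL, extended with the Boolean disjunction `boolOr` (⊕)
and the Boolean negation `bNeg` (∼). -/
inductive TForm (AP : Type) where
  | pos : AP → TForm AP
  | neg : AP → TForm AP
  | and : TForm AP → TForm AP → TForm AP
  | or : TForm AP → TForm AP → TForm AP
  | boolOr : TForm AP → TForm AP → TForm AP
  | bNeg : TForm AP → TForm AP
  | next : TForm AP → TForm AP
  | glob : TForm AP → TForm AP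
  | untl : TForm AP → TForm AP → TForm AP

/-- Plain LTL formulas (negation normal form; no ⊕, no ∼). -/
def TForm.isLTL {AP : Type} : TForm AP → Prop
  | .pos _ => True
  | .neg _ => True
  | .and φ ψ => φ.isLTL ∧ ψ.isLTL
  | .or φ ψ => φ.isLTL ∧ ψ.isLTL
  | .boolOr _ _ => False
  | .bNeg _ => False
  | .next φ => φ.isLTL
  | .glob φ => φ.isLTL
  | .untl φ ψ => φ.isLTL ∧ ψ.isLTL

/-- TeamLTL(⊕) formulas: no Boolean negation. -/
def TForm.noBNeg {AP : Type} : TForm AP → Prop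
  | .pos _ => True
  | .neg _ => True
  | .and φ ψ => φ.noBNeg ∧ ψ.noBNeg
  | .or φ ψ => φ.noBNeg ∧ ψ.noBNeg
  | .boolOr φ ψ => φ.noBNeg ∧ ψ.noBNeg
  | .bNeg _ => False
  | .next φ => φ.noBNeg
  | .glob φ => φ.noBNeg
  | .untl φ ψ => φ.noBNeg ∧ ψ.noBNeg

/-- Ordinary single-trace LTL satisfaction (⊕ read as ∨ and ∼ as ¬). -/
def TForm.sat {AP : Type} : Trace AP → TForm AP → Prop
  | t, .pos p => p ∈ t 0
  | t, .neg p => p ∉ t 0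
  | t, .and φ ψ => TForm.sat t φ ∧ TForm.sat t ψ
  | t, .or φ ψ => TForm.sat t φ ∨ TForm.sat t ψ
  | t, .boolOr φ ψ => TForm.sat t φ ∨ TForm.sat t ψ
  | t, .bNeg φ => ¬ TForm.sat t φ
  | t, .next φ => TForm.sat (t.shift 1) φ
  | t, .glob φ => ∀ i, TForm.sat (t.shift i) φ
  | t, .untl φ ψ => ∃ i, TForm.sat (t.shift i) ψ ∧ ∀ j < i, TForm.sat (t.shift j) φ

/-- Lax team semantics of TeamLTL(⊕,∼). -/
def TForm.teamSat {AP : Type} : Set (Trace AP) → TForm AP → Prop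
  | T, .pos p => ∀ t ∈ T, p ∈ t 0
  | T, .neg p => ∀ t ∈ T, p ∉ t 0
  | T, .and φ ψ => TForm.teamSat T φ ∧ TForm.teamSat T ψ
  | T, .or φ ψ => ∃ T₁ T₂, T₁ ∪ T₂ = T ∧ TForm.teamSat T₁ φ ∧ TForm.teamSat T₂ ψ
  | T, .boolOr φ ψ => TForm.teamSat T φ ∨ TForm.teamSat T ψ
  | T, .bNeg φ => ¬ TForm.teamSat T φ
  | T, .next φ => TForm.teamSat (teamShift T (fun _ => {1})) φ
  | T, .glob φ => ∀ f, goodF T f → TForm.teamSat (teamShift T f) φ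
  | T, .untl φ ψ => ∃ f, goodF T f ∧ TForm.teamSat (teamShift T f) ψ ∧
      ∀ f', goodF {t ∈ T | ¬ IsGreatest (f t) 0} f' →
        fLT {t ∈ T | ¬ IsGreatest (f t) 0} f' f →
        ({t ∈ T | ¬ IsGreatest (f t) 0} = (∅ : Set (Trace AP)) ∨
          TForm.teamSat (teamShift {t ∈ T | ¬ IsGreatest (f t) 0} f') φ)

/-- HyperLTL formulas (quantifiers may occur anywhere). -/
inductive HForm (AP V : Type) where
  | atom : AP → V → HForm AP V
  | hnot : HForm AP V → HForm AP V
  | hand : HForm AP V → HForm AP V → HForm AP V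
  | hor : HForm AP V → HForm AP V → HForm AP V
  | hnext : HForm AP V → HForm AP V
  | hglob : HForm AP V → HForm AP V
  | huntl : HForm AP V → HForm AP V → HForm AP V
  | hall : V → HForm AP V → HForm AP V
  | hex : V → HForm AP V → HForm AP V

/-- Shift a trace assignment: `Π[i,∞]`. -/
def shiftA {AP V : Type} (A : V → Trace AP) (i : ℕ) : V → Trace AP := fun v => (A v).shift i

/-- HyperLTL satisfaction `Π ⊨_T φ`. -/
def HForm.hsat {AP V : Type} [DecidableEq V] :
    (V → Trace AP) → Set (Trace AP) → HForm AP V → Prop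
  | A, _, .atom a v => a ∈ A v 0
  | A, T, .hnot φ => ¬ HForm.hsat A T φ
  | A, T, .hand φ ψ => HForm.hsat A T φ ∧ HForm.hsat A T ψ
  | A, T, .hor φ ψ => HForm.hsat A T φ ∨ HForm.hsat A T ψ
  | A, T, .hnext φ => HForm.hsat (shiftA A 1) T φ
  | A, T, .hglob φ => ∀ i, HForm.hsat (shiftA A i) T φ
  | A, T, .huntl φ ψ => ∃ i, HForm.hsat (shiftA A i) T ψ ∧
      ∀ j < i, HForm.hsat (shiftA A j) T φ
  | A, T, .hall v φ => ∀ t ∈ T, HForm.hsat (Function.update A v t) T φ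
  | A, T, .hex v φ => ∃ t ∈ T, HForm.hsat (Function.update A v t) T φ

/-- Quantifier-free HyperLTL formulas. -/
def HForm.QFree {AP V : Type} : HForm AP V → Prop
  | .atom _ _ => True
  | .hnot φ => φ.QFree
  | .hand φ ψ => φ.QFree ∧ ψ.QFree
  | .hor φ ψ => φ.QFree ∧ ψ.QFree
  | .hnext φ => φ.QFree
  | .hglob φ => φ.QFree
  | .huntl φ ψ => φ.QFree ∧ ψ.QFree
  | .hall _ _ => False
  | .hex _ _ => False

/-- All trace variables occurring in a HyperLTL formula. -/
def HForm.vars {AP V : Type} : HForm AP V → Set V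
  | .atom _ v => {v}
  | .hnot φ => φ.vars
  | .hand φ ψ => φ.vars ∪ ψ.vars
  | .hor φ ψ => φ.vars ∪ ψ.vars
  | .hnext φ => φ.vars
  | .hglob φ => φ.vars
  | .huntl φ ψ => φ.vars ∪ ψ.vars
  | .hall v φ => insert v φ.vars
  | .hex v φ => insert v φ.vars

/-- Free trace variables of a HyperLTL formula. -/
def HForm.free {AP V : Type} : HForm AP V → Set V
  | .atom _ v => {v}
  | .hnot φ => φ.free
  | .hand φ ψ => φ.free ∪ ψ.free
  | .hor φ ψ => φ.free ∪ ψ.free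
  | .hnext φ => φ.free
  | .hglob φ => φ.free
  | .huntl φ ψ => φ.free ∪ ψ.free
  | .hall v φ => φ.free \ {v}
  | .hex v φ => φ.free \ {v}

/-- Rename the trace variables of a HyperLTL formula. -/
def HForm.rename {AP V : Type} (ρ : V → V) : HForm AP V → HForm AP V
  | .atom a v => .atom a (ρ v)
  | .hnot φ => .hnot (φ.rename ρ)
  | .hand φ ψ => .hand (φ.rename ρ) (ψ.rename ρ)
  | .hor φ ψ => .hor (φ.rename ρ) (ψ.rename ρ)
  | .hnext φ => .hnext (φ.rename ρ)
  | .hglob φ => .hglob (φ.rename ρ)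
  | .huntl φ ψ => .huntl (φ.rename ρ) (ψ.rename ρ)
  | .hall v φ => .hall (ρ v) (φ.rename ρ)
  | .hex v φ => .hex (ρ v) (φ.rename ρ)

/-- Hyperification `φ ↦ φ(π)`: replace each proposition `p` by `p_π`. -/
def TForm.hyperify {AP V : Type} (π : V) : TForm AP → HForm AP V
  | .pos p => .atom p π
  | .neg p => .hnot (.atom p π)
  | .and φ ψ => .hand (φ.hyperify π) (ψ.hyperify π)
  | .or φ ψ => .hor (φ.hyperify π) (ψ.hyperify π)
  | .boolOr φ ψ => .hor (φ.hyperify π) (ψ.hyperify π)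
  | .bNeg φ => .hnot (φ.hyperify π)
  | .next φ => .hnext (φ.hyperify π)
  | .glob φ => .hglob (φ.hyperify π)
  | .untl φ ψ => .huntl (φ.hyperify π) (ψ.hyperify π)

/-- A tautological NNF LTL formula. -/
def TForm.verum {AP : Type} [Inhabited AP] : TForm AP := .or (.pos default) (.neg default)

/-- Negation normal form of the (classical) negation of an NNF LTL formula. -/
def TForm.dual {AP : Type} [Inhabited AP] : TForm AP → TForm AP
  | .pos p => .neg p
  | .neg p => .pos p
  | .and φ ψ => .or φ.dual ψ.dual
  | .or φ ψ => .and φ.dual ψ.dual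
  | .boolOr φ ψ => .and φ.dual ψ.dual
  | .bNeg φ => φ
  | .next φ => .next φ.dual
  | .glob φ => .untl TForm.verum φ.dual
  | .untl φ ψ => .or (.glob ψ.dual) (.untl ψ.dual (.and φ.dual ψ.dual))

/-- The shorthand `∃β := ∼β^d`. -/
def TForm.tExists {AP : Type} [Inhabited AP] (β : TForm AP) : TForm AP := .bNeg β.dual

mutual
/-- Erase trace-variable subscripts: turn a quantifier-free HyperLTL formula into
an (NNF) LTL formula, pushing classical negations inward. -/
def deH {AP V : Type} [Inhabited AP] : HForm AP V → TForm AP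
  | .atom a _ => .pos a
  | .hnot φ => deHn φ
  | .hand φ ψ => .and (deH φ) (deH ψ)
  | .hor φ ψ => .or (deH φ) (deH ψ)
  | .hnext φ => .next (deH φ)
  | .hglob φ => .glob (deH φ)
  | .huntl φ ψ => .untl (deH φ) (deH ψ)
  | .hall _ φ => deH φ
  | .hex _ φ => deH φ

/-- NNF of the negation of an erased quantifier-free HyperLTL formula. -/
def deHn {AP V : Type} [Inhabited AP] : HForm AP V → TForm AP
  | .atom a _ => .neg a
  | .hnot φ => deH φ
  | .hand φ ψ => .or (deHn φ) (deHn ψ)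
  | .hor φ ψ => .and (deHn φ) (deHn ψ)
  | .hnext φ => .next (deHn φ)
  | .hglob φ => .untl TForm.verum (deHn φ)
  | .huntl φ ψ => .or (.glob (deHn ψ)) (.untl (deHn ψ) (.and (deHn φ) (deHn ψ)))
  | .hall _ φ => deHn φ
  | .hex _ φ => deHn φ
end

/-- `φ₀ ∨ φ₁ ∨ ⋯ ∨ φₘ` for a nonempty family of HyperLTL formulas. -/
def HForm.bigOrF {AP V : Type} {m : ℕ} (f : Fin (m + 1) → HForm AP V) : HForm AP V :=
  (List.ofFn fun i : Fin m => f i.succ).foldr .hor (f 0)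

/-- `φ₀ ∧ φ₁ ∧ ⋯ ∧ φₘ` for a nonempty family of HyperLTL formulas. -/
def HForm.bigAndF {AP V : Type} {m : ℕ} (f : Fin (m + 1) → HForm AP V) : HForm AP V :=
  (List.ofFn fun i : Fin m => f i.succ).foldr .hand (f 0)

/-- `φ₀ ⊕ φ₁ ⊕ ⋯ ⊕ φₘ` for a nonempty family of team formulas. -/
def TForm.bigBoolOrF {AP : Type} {m : ℕ} (f : Fin (m + 1) → TForm AP) : TForm AP :=
  (List.ofFn fun i : Fin m => f i.succ).foldr .boolOr (f 0)

/-- `φ₀ ∧ φ₁ ∧ ⋯ ∧ φₘ` for a nonempty family of team formulas. -/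
def TForm.bigAndF {AP : Type} {m : ℕ} (f : Fin (m + 1) → TForm AP) : TForm AP :=
  (List.ofFn fun i : Fin m => f i.succ).foldr .and (f 0)

/-- Apply a quantifier block (`true` = ∀, `false` = ∃). -/
def applyBlock {AP V : Type} (qs : List (Bool × V)) (φ : HForm AP V) : HForm AP V :=
  qs.foldr (fun q acc => if q.1 then .hall q.2 acc else .hex q.2 acc) φ

/-- The dual of a quantifier block. -/
def dualBlock {V : Type} (qs : List (Bool × V)) : List (Bool × V) :=
  qs.map fun q => (!q.1, q.2)

lemma hsat_hyperify {AP V : Type} [DecidableEq V] (π : V) (φ : TForm AP)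
    (T : Set (Trace AP)) : ∀ (A : V → Trace AP),
    HForm.hsat A T (φ.hyperify π) ↔ φ.sat (A π) := by
  induction φ with
  | pos p => intro A; rfl
  | neg p => intro A; rfl
  | and φ ψ ihφ ihψ => intro A; simp [TForm.hyperify, HForm.hsat, TForm.sat, ihφ, ihψ]
  | or φ ψ ihφ ihψ => intro A; simp [TForm.hyperify, HForm.hsat, TForm.sat, ihφ, ihψ]
  | boolOr φ ψ ihφ ihψ => intro A; simp [TForm.hyperify, HForm.hsat, TForm.sat, ihφ, ihψ]
  | bNeg φ ih => intro A; simp [TForm.hyperify, HForm.hsat, TForm.sat, ih]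
  | next φ ih =>
    intro A
    simp only [TForm.hyperify, HForm.hsat, TForm.sat, ih (shiftA A 1)]
    rfl
  | glob φ ih =>
    intro A
    simp only [TForm.hyperify, HForm.hsat, TForm.sat]
    exact forall_congr' fun i => ih (shiftA A i)
  | untl φ ψ ihφ ihψ =>
    intro A
    simp only [TForm.hyperify, HForm.hsat, TForm.sat]
    constructor
    · rintro ⟨i, h1, h2⟩
      exact ⟨i, (ihψ _).mp h1, fun j hj => (ihφ _).mp (h2 j hj)⟩
    · rintro ⟨i, h1, h2⟩
      exact ⟨i, (ihψ _).mpr h1, fun j hj => (ihφ _).mpr (h2 j hj)⟩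

lemma flatness {AP : Type} (φ : TForm AP) (hφ : φ.isLTL) :
    ∀ (T : Set (Trace AP)), TForm.teamSat T φ ↔ ∀ t ∈ T, φ.sat t := by
  induction φ with
  | pos p => intro T; rfl
  | neg p => intro T; rfl
  | and φ ψ ihφ ihψ =>
    intro T
    rw [show TForm.teamSat T (.and φ ψ) = (TForm.teamSat T φ ∧ TForm.teamSat T ψ) from rfl,
      ihφ hφ.1, ihψ hφ.2]
    constructor
    · rintro ⟨h1, h2⟩ t ht; exact ⟨h1 t ht, h2 t ht⟩
    · intro h; exact ⟨fun t ht => (h t ht).1, fun t ht => (h t ht).2⟩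
  | or φ ψ ihφ ihψ =>
    intro T
    constructor
    · rintro ⟨T₁, T₂, hU, h1, h2⟩ t ht
      rw [ihφ hφ.1] at h1; rw [ihψ hφ.2] at h2
      rcases (hU ▸ ht : t ∈ T₁ ∪ T₂) with h | h
      · exact Or.inl (h1 t h)
      · exact Or.inr (h2 t h)
    · intro h
      refine ⟨{t ∈ T | φ.sat t}, {t ∈ T | ψ.sat t}, ?_, ?_, ?_⟩
      · ext t
        simp only [Set.mem_union, Set.mem_setOf_eq]
        constructor
        · rintro (⟨ht, _⟩ | ⟨ht, _⟩) <;> exact ht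
        · intro ht; rcases h t ht with h' | h'
          · exact Or.inl ⟨ht, h'⟩
          · exact Or.inr ⟨ht, h'⟩
      · rw [ihφ hφ.1]; exact fun t ht => ht.2
      · rw [ihψ hφ.2]; exact fun t ht => ht.2
  | boolOr φ ψ ihφ ihψ => exact absurd hφ id
  | bNeg φ ih => exact absurd hφ id
  | next φ ih =>
    intro T
    rw [show TForm.teamSat T (.next φ) = TForm.teamSat (teamShift T fun _ => {1}) φ from rfl,
      ih hφ]
    constructor
    · rintro h t ht
      exact h (t.shift 1) ⟨t, ht, 1, rfl, rfl⟩
    · rintro h s ⟨t, ht, i, hi, rfl⟩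
      rcases hi with rfl
      exact h t ht
  | glob φ ih =>
    intro T
    constructor
    · intro h t ht i
      have := h (fun _ => {i}) (fun _ _ => ⟨i, rfl⟩)
      rw [ih hφ] at this
      exact this (t.shift i) ⟨t, ht, i, rfl, rfl⟩
    · intro h f hf
      rw [ih hφ]
      rintro s ⟨t, ht, i, hi, rfl⟩
      exact h t ht i
  | untl φ ψ ihφ ihψ =>
    intro T
    constructor
    · rintro ⟨f, hf, hψ, hcond⟩ t ht
      classical
      set i := sInf (f t) with hidef
      have hi : i ∈ f t := Nat.sInf_mem (hf t ht)
      refine ⟨i, ?_, ?_⟩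
      · rw [ihψ hφ.2] at hψ
        exact hψ (t.shift i) ⟨t, ht, i, hi, rfl⟩
      · intro j hj
        have htT' : t ∈ {s ∈ T | ¬ IsGreatest (f s) 0} := by
          refine ⟨ht, fun hg => ?_⟩
          have := hg.2 hi
          omega
        set f' : Trace AP → Set ℕ := fun s => if s = t then {j} else {0} with hf'def
        have hgood : goodF {s ∈ T | ¬ IsGreatest (f s) 0} f' := by
          intro s _
          by_cases h : s = t <;> simp [hf'def, h]
        have hlt : fLT {s ∈ T | ¬ IsGreatest (f s) 0} f' f := by
          rintro s ⟨hsT, hsg⟩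
          by_cases h : s = t
          · subst h
            constructor
            · simp only [hf'def, if_pos rfl, csInf_singleton]
              omega
            · intro m hm
              have hmi : i ≤ m := Nat.sInf_le hm.1
              exact ⟨j, by simp [hf'def, IsGreatest, upperBounds], by omega⟩
          · constructor
            · simp [hf'def, h]
            · intro m hm
              refine ⟨0, by simp [hf'def, h, IsGreatest, upperBounds], ?_⟩
              rcases Nat.eq_zero_or_pos m with rfl | hpos
              · exact absurd hm hsg
              · exact hpos
        rcases hcond f' hgood hlt with he | hsat
        · exact absurd htT' (he ▸ id)
        · rw [ihφ hφ.1] at hsat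
          exact hsat (t.shift j) ⟨t, htT', j, by simp [hf'def], rfl⟩
    · intro h
      classical
      have h' : ∀ t, ∃ i, t ∈ T →
          ψ.sat (t.shift i) ∧ ∀ j < i, φ.sat (t.shift j) := by
        intro t
        by_cases ht : t ∈ T
        · obtain ⟨i, hi⟩ := h t ht
          exact ⟨i, fun _ => hi⟩
        · exact ⟨0, fun h' => absurd h' ht⟩
      choose w hw using h'
      refine ⟨fun t => {w t}, fun t _ => ⟨w t, rfl⟩, ?_, ?_⟩
      · rw [ihψ hφ.2]
        rintro s ⟨t, ht, i, hi, rfl⟩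
        rcases hi with rfl
        exact (hw t ht).1
      · intro f' hgood hlt
        right
        rw [ihφ hφ.1]
        rintro s ⟨t, ht, j, hj, rfl⟩
        obtain ⟨_, hg⟩ := hlt t ht
        obtain ⟨m', hm', hm'lt⟩ := hg (w t)
          ⟨rfl, fun x hx => le_of_eq (Set.mem_singleton_iff.mp hx)⟩
        have : j ≤ m' := hm'.2 hj
        exact (hw t ht.1).2 j (by omega)

lemma hsat_bigOrF {AP V : Type} [DecidableEq V] {m : ℕ} (f : Fin (m + 1) → HForm AP V)
    (A : V → Trace AP) (T : Set (Trace AP)) :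
    HForm.hsat A T (HForm.bigOrF f) ↔ ∃ i, HForm.hsat A T (f i) := by
  have key : ∀ (l : List (HForm AP V)) (b : HForm AP V),
      HForm.hsat A T (l.foldr .hor b) ↔ HForm.hsat A T b ∨ ∃ x ∈ l, HForm.hsat A T x := by
    intro l b
    induction l with
    | nil => simp
    | cons x xs ih =>
      simp only [List.foldr_cons, List.mem_cons]
      rw [show HForm.hsat A T (.hor x (xs.foldr .hor b)) =
        (HForm.hsat A T x ∨ HForm.hsat A T (xs.foldr .hor b)) from rfl, ih]
      constructor
      · rintro (h | h | ⟨y, hy, h⟩)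
        · exact Or.inr ⟨x, Or.inl rfl, h⟩
        · exact Or.inl h
        · exact Or.inr ⟨y, Or.inr hy, h⟩
      · rintro (h | ⟨y, rfl | hy, h⟩)
        · exact Or.inr (Or.inl h)
        · exact Or.inl h
        · exact Or.inr (Or.inr ⟨y, hy, h⟩)
  rw [HForm.bigOrF, key]
  simp only [List.mem_ofFn]
  constructor
  · rintro (h | ⟨x, ⟨i, rfl⟩, h⟩)
    · exact ⟨0, h⟩
    · exact ⟨i.succ, h⟩
  · rintro ⟨i, h⟩
    rcases Fin.eq_zero_or_eq_succ i with rfl | ⟨j, rfl⟩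
    · exact Or.inl h
    · exact Or.inr ⟨f j.succ, ⟨j, rfl⟩, h⟩

lemma teamSat_bigBoolOrF {AP : Type} {m : ℕ} (f : Fin (m + 1) → TForm AP)
    (T : Set (Trace AP)) :
    TForm.teamSat T (TForm.bigBoolOrF f) ↔ ∃ i, TForm.teamSat T (f i) := by
  have key : ∀ (l : List (TForm AP)) (b : TForm AP),
      TForm.teamSat T (l.foldr .boolOr b) ↔
        TForm.teamSat T b ∨ ∃ x ∈ l, TForm.teamSat T x := by
    intro l b
    induction l with
    | nil => simp
    | cons x xs ih =>
      simp only [List.foldr_cons, List.mem_cons]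
      rw [show TForm.teamSat T (.boolOr x (xs.foldr .boolOr b)) =
        (TForm.teamSat T x ∨ TForm.teamSat T (xs.foldr .boolOr b)) from rfl, ih]
      constructor
      · rintro (h | h | ⟨y, hy, h⟩)
        · exact Or.inr ⟨x, Or.inl rfl, h⟩
        · exact Or.inl h
        · exact Or.inr ⟨y, Or.inr hy, h⟩
      · rintro (h | ⟨y, rfl | hy, h⟩)
        · exact Or.inr (Or.inl h)
        · exact Or.inl h
        · exact Or.inr (Or.inr ⟨y, hy, h⟩)
  rw [TForm.bigBoolOrF, key]
  simp only [List.mem_ofFn]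
  constructor
  · rintro (h | ⟨x, ⟨i, rfl⟩, h⟩)
    · exact ⟨0, h⟩
    · exact ⟨i.succ, h⟩
  · rintro ⟨i, h⟩
    rcases Fin.eq_zero_or_eq_succ i with rfl | ⟨j, rfl⟩
    · exact Or.inl h
    · exact Or.inr ⟨f j.succ, ⟨j, rfl⟩, h⟩

/-- TeamLTL(⊕) ≤ PBC(∀HyperLTL): a formula in ⊕-disjunctive
normal form `⊕ᵢ αᵢ` is equivalent to the sentence `⋁ᵢ ∀π.αᵢ(π)`. -/
theorem teamLTL_boolOr_le_pbc_forall_hyperLTL {AP V : Type} [DecidableEq V] (k : ℕ)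
    (α : Fin (k + 1) → TForm AP) (hα : ∀ i, (α i).isLTL)
    (T : Set (Trace AP)) (A : V → Trace AP) (π : V) :
    TForm.teamSat T (TForm.bigBoolOrF α) ↔
      HForm.hsat A T (HForm.bigOrF fun i => .hall π ((α i).hyperify π)) := by
  rw [teamSat_bigBoolOrF, hsat_bigOrF]
  apply exists_congr
  intro i
  rw [flatness (α i) (hα i)]
  show _ ↔ ∀ t ∈ T, HForm.hsat (Function.update A π t) T ((α i).hyperify π)
  refine forall_congr' fun t => forall_congr' fun ht => ?_
  rw [hsat_hyperify, Function.update_self]
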